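/- arXiv:1910.05517 — 7 statements merged into one kernel-verified Lean document; each statement's English description precedes it below -/
import Mathlib

section
/- Let N be a positive integer, h = 1/(N+1), and define p_h(n) = 4(N+1)^2 \sin^2(nπ/(N+1)). For any integers n_1, n_2, n_3, n_4 with n_1 + n_2 = n_3 + n_4, the quantity q_h(n) = p_h(n_1) + p_h(n_2) - p_h(n_3) - p_h(n_4) satisfies the identity q_h(n) = 8(N+1)^2 \cos((n_1+n_2)π/(N+1)) \sin((n_1-n_2+n_3-n_4)π/(2(N+1))) \sin((n_1-n_2-n_3+n_4)π/(2(N+1))). -/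
open Real

lemma trig_aux (u v w : ℝ) :
    sin u ^ 2 + sin v ^ 2 - sin w ^ 2 - sin (u + v - w) ^ 2
      = 2 * cos (u + v) * sin (w - v) * sin (u - w) := by
  rw [Real.sin_sq, Real.sin_sq, Real.sin_sq, Real.sin_sq]
  have e1 : Real.cos (2*w) + Real.cos (2*(u+v-w))
      = 2 * Real.cos (u+v) * Real.cos (2*w-u-v) := by
    rw [Real.cos_add_cos, show (2*w + 2*(u+v-w))/2 = u+v by ring,
      show (2*w - 2*(u+v-w))/2 = 2*w-u-v by ring]
  have e2 : Real.cos (2*u) + Real.cos (2*v)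
      = 2 * Real.cos (u+v) * Real.cos (u-v) := by
    rw [Real.cos_add_cos, show (2*u + 2*v)/2 = u+v by ring,
      show (2*u - 2*v)/2 = u-v by ring]
  have e3 : Real.cos (2*w-u-v) - Real.cos (u-v) = 2 * Real.sin (w-v) * Real.sin (u-w) := by
    rw [Real.cos_sub_cos, show (2*w-u-v + (u-v))/2 = w-v by ring,
      show (2*w-u-v - (u-v))/2 = -(u-w) by ring, Real.sin_neg]
    ring
  linear_combination (e1 - e2)/2 + Real.cos (u+v) * e3 - Real.cos_sq u - Real.cos_sq v
    + Real.cos_sq w + Real.cos_sq (u+v-w)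

/-- Factorization of q_h(n) = p_h(n₁)+p_h(n₂)-p_h(n₃)-p_h(n₄) when n₁+n₂ = n₃+n₄,
where p_h(n) = 4(N+1)² sin²(nπ/(N+1)). -/
theorem qh_factorization (N : ℕ) (hN : 0 < N) (n₁ n₂ n₃ n₄ : ℤ)
    (hsum : n₁ + n₂ = n₃ + n₄) :
    (4 * (N + 1 : ℝ) ^ 2 * Real.sin ((n₁ : ℝ) * π / (N + 1)) ^ 2
      + 4 * (N + 1 : ℝ) ^ 2 * Real.sin ((n₂ : ℝ) * π / (N + 1)) ^ 2
      - 4 * (N + 1 : ℝ) ^ 2 * Real.sin ((n₃ : ℝ) * π / (N + 1)) ^ 2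
      - 4 * (N + 1 : ℝ) ^ 2 * Real.sin ((n₄ : ℝ) * π / (N + 1)) ^ 2)
    = 8 * (N + 1 : ℝ) ^ 2 * Real.cos (((n₁ : ℝ) + n₂) * π / (N + 1))
        * Real.sin (((n₁ : ℝ) - n₂ + n₃ - n₄) * π / (2 * (N + 1)))
        * Real.sin (((n₁ : ℝ) - n₂ - n₃ + n₄) * π / (2 * (N + 1))) := by
  have hne : (N : ℝ) + 1 ≠ 0 := by positivity
  have h4 : (n₄ : ℝ) = (n₁ : ℝ) + n₂ - n₃ := by
    have : n₄ = n₁ + n₂ - n₃ := by omega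
    rw [this]; push_cast; ring
  rw [h4]
  set u : ℝ := (n₁ : ℝ) * π / (N + 1) with hu
  set v : ℝ := (n₂ : ℝ) * π / (N + 1) with hv
  set w : ℝ := (n₃ : ℝ) * π / (N + 1) with hw
  have e₀ : ((n₁ : ℝ) + n₂ - n₃) * π / (N + 1) = u + v - w := by
    rw [hu, hv, hw]; ring
  have e₁ : ((n₁ : ℝ) + n₂) * π / (N + 1) = u + v := by
    rw [hu, hv]; ring
  have e₂ : ((n₁ : ℝ) - n₂ + n₃ - ((n₁ : ℝ) + n₂ - n₃)) * π / (2 * (N + 1)) = w - v := by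
    rw [hv, hw]; field_simp; ring
  have e₃ : ((n₁ : ℝ) - n₂ - n₃ + ((n₁ : ℝ) + n₂ - n₃)) * π / (2 * (N + 1)) = u - w := by
    rw [hu, hw]; field_simp; ring
  rw [e₀, e₁, e₂, e₃]
  linear_combination (4 : ℝ) * ((N : ℝ) + 1) ^ 2 * trig_aux u v w
end

section
/- Let 0 < α < 1/3. There exists a constant C > 0 such that for all positive integers N and all quadruples (n_1,n_2,n_3,n_4) of integers in Λ_N = { n : |n| ≤ N/2, |n - N/4| < N^α } with n_1 + n_2 = n_3 + n_4, the quantity q_h(n) = p_h(n_1)+p_h(n_2)-p_h(n_3)-p_h(n_4), with p_h(n) = 4(N+1)^2 sin^2(nπ/(N+1)), satisfies |q_h(n)| ≤ C N^{3α - 1}. -/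
open Real

lemma qh_key_identity (a b c d : ℝ) (h : a + b = c + d) :
    Real.sin a ^ 2 + Real.sin b ^ 2 - Real.sin c ^ 2 - Real.sin d ^ 2
      = Real.cos (a + b) * (Real.cos (c - d) - Real.cos (a - b)) := by
  have h1 : ∀ x : ℝ, Real.sin x ^ 2 = (1 - Real.cos (2 * x)) / 2 := by
    intro x
    rw [Real.sin_sq, Real.cos_sq]
    ring
  rw [h1, h1, h1, h1]
  have h2 := Real.cos_add_cos (2 * a) (2 * b)
  have h3 := Real.cos_add_cos (2 * c) (2 * d)
  have e1 : (2 * a + 2 * b) / 2 = a + b := by ring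
  have e2 : (2 * a - 2 * b) / 2 = a - b := by ring
  have e3 : (2 * c + 2 * d) / 2 = c + d := by ring
  have e4 : (2 * c - 2 * d) / 2 = c - d := by ring
  rw [e1, e2] at h2
  rw [e3, e4, ← h] at h3
  linear_combination (h3 - h2) / 2

lemma one_sub_cos_le_half_sq (x : ℝ) : 1 - Real.cos x ≤ x ^ 2 / 2 := by
  have h : Real.cos x = 1 - 2 * Real.sin (x / 2) ^ 2 := by
    have hc := Real.cos_two_mul (x / 2)
    have hs := Real.sin_sq_add_cos_sq (x / 2)
    have hx : 2 * (x / 2) = x := by ring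
    rw [hx] at hc
    linarith
  have h2 : Real.sin (x / 2) ^ 2 ≤ (x / 2) ^ 2 := Real.sin_sq_le_sq
  nlinarith

set_option maxHeartbeats 1000000 in
/-- For α < 1/3 and all quadruples in Λ_N with n₁+n₂=n₃+n₄, the phase difference
q_h(n) is small: |q_h(n)| ≤ C N^{3α-1}. -/
theorem qh_small_on_LambdaN (α : ℝ) (hα0 : 0 < α) (hα1 : α < 1 / 3) :
    ∃ C > 0, ∀ N : ℕ, 0 < N → ∀ n₁ n₂ n₃ n₄ : ℤ,
      (∀ n ∈ [n₁, n₂, n₃, n₄],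
        |(n : ℝ)| ≤ (N : ℝ) / 2 ∧ |(n : ℝ) - (N : ℝ) / 4| < (N : ℝ) ^ α) →
      n₁ + n₂ = n₃ + n₄ →
      |4 * (N + 1 : ℝ) ^ 2 * Real.sin ((n₁ : ℝ) * π / (N + 1)) ^ 2
        + 4 * (N + 1 : ℝ) ^ 2 * Real.sin ((n₂ : ℝ) * π / (N + 1)) ^ 2
        - 4 * (N + 1 : ℝ) ^ 2 * Real.sin ((n₃ : ℝ) * π / (N + 1)) ^ 2
        - 4 * (N + 1 : ℝ) ^ 2 * Real.sin ((n₄ : ℝ) * π / (N + 1)) ^ 2|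
      ≤ C * (N : ℝ) ^ (3 * α - 1) := by
  refine ⟨48 * π ^ 3, by positivity, ?_⟩
  intro N hN n₁ n₂ n₃ n₄ hmem hsum
  have hNR : (0 : ℝ) < (N : ℝ) := by exact_mod_cast hN
  have hNR1 : (1 : ℝ) ≤ (N : ℝ) := by exact_mod_cast hN
  set M : ℝ := (N : ℝ) + 1 with hMdef
  have hM : (0 : ℝ) < M := by positivity
  have hNα : (1 : ℝ) ≤ (N : ℝ) ^ α := by
    calc (1 : ℝ) = 1 ^ α := (Real.one_rpow α).symm
    _ ≤ (N : ℝ) ^ α := Real.rpow_le_rpow zero_le_one hNR1 hα0.le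
  -- extract bounds
  have h1 := (hmem n₁ (by simp)).2
  have h2 := (hmem n₂ (by simp)).2
  have h3 := (hmem n₃ (by simp)).2
  have h4 := (hmem n₄ (by simp)).2
  obtain ⟨h1l, h1r⟩ := abs_lt.mp h1
  obtain ⟨h2l, h2r⟩ := abs_lt.mp h2
  obtain ⟨h3l, h3r⟩ := abs_lt.mp h3
  obtain ⟨h4l, h4r⟩ := abs_lt.mp h4
  set a : ℝ := (n₁ : ℝ) * π / M
  set b : ℝ := (n₂ : ℝ) * π / M
  set c : ℝ := (n₃ : ℝ) * π / M
  set d : ℝ := (n₄ : ℝ) * π / M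
  have hsumR : (n₁ : ℝ) + n₂ = (n₃ : ℝ) + n₄ := by exact_mod_cast congrArg Int.cast hsum
  have habcd : a + b = c + d := by
    have e1 : a + b = ((n₁ : ℝ) + n₂) * π / M := by simp only [a, b]; ring
    have e2 : c + d = ((n₃ : ℝ) + n₄) * π / M := by simp only [c, d]; ring
    rw [e1, e2, hsumR]
  -- key identity
  have hid : 4 * M ^ 2 * Real.sin a ^ 2 + 4 * M ^ 2 * Real.sin b ^ 2
      - 4 * M ^ 2 * Real.sin c ^ 2 - 4 * M ^ 2 * Real.sin d ^ 2
      = 4 * M ^ 2 * (Real.cos (a + b) * (Real.cos (c - d) - Real.cos (a - b))) := by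
    rw [← qh_key_identity a b c d habcd]; ring
  rw [hid]
  -- bound |cos (a+b)|
  have hπ : (0 : ℝ) < π := Real.pi_pos
  have hcos_ab : |Real.cos (a + b)| ≤ 3 * (N : ℝ) ^ α * π / M := by
    have key : a + b = π / 2 - (π / M * (M / 2 - ((n₁ : ℝ) + n₂))) := by
      simp only [a, b]
      field_simp
      ring
    rw [key, ← Real.sin_pi_div_two_sub]
    have h5 : π / 2 - (π / 2 - π / M * (M / 2 - ((n₁ : ℝ) + n₂)))
        = π / M * (M / 2 - ((n₁ : ℝ) + n₂)) := by ring
    rw [h5]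
    calc |Real.sin (π / M * (M / 2 - ((n₁ : ℝ) + n₂)))|
        ≤ |π / M * (M / 2 - ((n₁ : ℝ) + n₂))| := Real.abs_sin_le_abs
      _ = π / M * |M / 2 - ((n₁ : ℝ) + n₂)| := by
          rw [abs_mul, abs_of_pos (by positivity)]
      _ ≤ π / M * (3 * (N : ℝ) ^ α) := by
          have : |M / 2 - ((n₁ : ℝ) + n₂)| ≤ 3 * (N : ℝ) ^ α := by
            rw [abs_le]
            constructor <;> simp only [hMdef] <;> linarith
          exact mul_le_mul_of_nonneg_left this (by positivity)
      _ = 3 * (N : ℝ) ^ α * π / M := by ring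
  -- bound |cos (c-d) - cos (a-b)|
  have hdiffsq : ∀ m₁ m₂ : ℤ, |(m₁ : ℝ) - (N : ℝ) / 4| < (N : ℝ) ^ α →
      |(m₂ : ℝ) - (N : ℝ) / 4| < (N : ℝ) ^ α →
      ((m₁ : ℝ) * π / M - (m₂ : ℝ) * π / M) ^ 2 ≤ 4 * ((N : ℝ) ^ α) ^ 2 * π ^ 2 / M ^ 2 := by
    intro m₁ m₂ hm₁ hm₂
    obtain ⟨hm1l, hm1r⟩ := abs_lt.mp hm₁
    obtain ⟨hm2l, hm2r⟩ := abs_lt.mp hm₂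
    have e : (m₁ : ℝ) * π / M - (m₂ : ℝ) * π / M = ((m₁ : ℝ) - m₂) * (π / M) := by
      field_simp
    rw [e, mul_pow]
    have h6 : ((m₁ : ℝ) - m₂) ^ 2 ≤ (2 * (N : ℝ) ^ α) ^ 2 := by
      apply sq_le_sq' <;> linarith
    calc ((m₁ : ℝ) - m₂) ^ 2 * (π / M) ^ 2
        ≤ (2 * (N : ℝ) ^ α) ^ 2 * (π / M) ^ 2 :=
          mul_le_mul_of_nonneg_right h6 (by positivity)
      _ = 4 * ((N : ℝ) ^ α) ^ 2 * π ^ 2 / M ^ 2 := by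
          rw [div_pow]; ring
  have hcos_diff : |Real.cos (c - d) - Real.cos (a - b)|
      ≤ 4 * ((N : ℝ) ^ α) ^ 2 * π ^ 2 / M ^ 2 := by
    have e1 : Real.cos (c - d) - Real.cos (a - b)
        = (1 - Real.cos (a - b)) - (1 - Real.cos (c - d)) := by ring
    rw [e1]
    have hcd : 1 - Real.cos (c - d) ≤ (c - d) ^ 2 / 2 := one_sub_cos_le_half_sq _
    have hab : 1 - Real.cos (a - b) ≤ (a - b) ^ 2 / 2 := one_sub_cos_le_half_sq _
    have hcd0 : 0 ≤ 1 - Real.cos (c - d) := by have := Real.cos_le_one (c - d); linarith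
    have hab0 : 0 ≤ 1 - Real.cos (a - b) := by have := Real.cos_le_one (a - b); linarith
    have hcd2 : (c - d) ^ 2 ≤ 4 * ((N : ℝ) ^ α) ^ 2 * π ^ 2 / M ^ 2 := hdiffsq n₃ n₄ h3 h4
    have hab2 : (a - b) ^ 2 ≤ 4 * ((N : ℝ) ^ α) ^ 2 * π ^ 2 / M ^ 2 := hdiffsq n₁ n₂ h1 h2
    rw [abs_le]
    constructor <;> nlinarith
  -- combine
  have hcosab0 : (0 : ℝ) ≤ |Real.cos (a + b)| := abs_nonneg _
  calc |4 * M ^ 2 * (Real.cos (a + b) * (Real.cos (c - d) - Real.cos (a - b)))|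
      = 4 * M ^ 2 * (|Real.cos (a + b)| * |Real.cos (c - d) - Real.cos (a - b)|) := by
        rw [abs_mul, abs_mul, abs_mul, abs_of_nonneg (show (0:ℝ) ≤ 4 by norm_num),
          abs_of_nonneg (sq_nonneg M)]
    _ ≤ 4 * M ^ 2 * ((3 * (N : ℝ) ^ α * π / M) * (4 * ((N : ℝ) ^ α) ^ 2 * π ^ 2 / M ^ 2)) := by
        apply mul_le_mul_of_nonneg_left _ (by positivity)
        exact mul_le_mul hcos_ab hcos_diff (abs_nonneg _) (by positivity)
    _ = 48 * π ^ 3 * (((N : ℝ) ^ α) ^ 3 / M) := by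
        field_simp
        ring
    _ ≤ 48 * π ^ 3 * (N : ℝ) ^ (3 * α - 1) := by
        apply mul_le_mul_of_nonneg_left _ (by positivity)
        have e3 : ((N : ℝ) ^ α) ^ 3 = (N : ℝ) ^ (3 * α) := by
          rw [← Real.rpow_natCast ((N : ℝ) ^ α) 3, ← Real.rpow_mul hNR.le]
          norm_num [mul_comm]
        have e4 : (N : ℝ) ^ (3 * α - 1) = (N : ℝ) ^ (3 * α) / (N : ℝ) := by
          rw [Real.rpow_sub hNR, Real.rpow_one]
        rw [e3, e4]
        gcongr
        simp only [hMdef]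
        linarith
end

section
/- (Direct Ingham inequality) Let (μ_n)_{n ∈ ℤ} be a sequence of real numbers and γ > 0 such that μ_{n+1} - μ_n ≥ γ for all n. Then for every T > 0 there exists a constant C = C(T, γ) > 0 such that for every finitely supported sequence (a_n) of complex numbers, ∫_{-T}^{T} | \sum_n a_n e^{i μ_n t} |^2 dt ≤ C \sum_n |a_n|^2. -/
/-!
On `[-T, T]` the Gaussian `exp (-t²)` is at least `exp (-T²)`, so it suffices to bound
`∫ exp (-t²) ‖∑ aₙ exp (i μₙ t)‖²` over all of `ℝ`. Expanding the square, this weighted integral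
is the quadratic form in `a` of the matrix `√π exp (-(μ n - μ m)² / 4)`, the Fourier transform of
the Gaussian at the frequency differences. The gap condition gives `|μ n - μ m| ≥ γ |n - m|`, so
the matrix is dominated by the Toeplitz kernel `exp (-γ² (n - m)² / 4)`, which is summable over
`ℤ`, and Schur's test bounds the form by `(∑ₖ exp (-γ² k² / 4)) ∑ ‖a n‖²`.
-/

open Real Complex Finset MeasureTheory ComplexConjugate
open scoped Interval

section Gap

variable {μ : ℤ → ℝ} {γ : ℝ}

lemma mul_sub_le_sub_of_gap (hgap : ∀ n : ℤ, μ (n + 1) - μ n ≥ γ) {n m : ℤ} (h : n ≤ m) :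
    γ * (m - n) ≤ μ m - μ n := by
  induction m, h using Int.leInduction with
  | base => simp
  | succ m _ ih => push_cast; linarith [hgap m]

lemma sq_mul_sq_sub_le_sq_sub_of_gap (hγ : 0 ≤ γ) (hgap : ∀ n : ℤ, μ (n + 1) - μ n ≥ γ)
    (n m : ℤ) : γ ^ 2 * ((n : ℝ) - m) ^ 2 ≤ (μ n - μ m) ^ 2 := by
  wlog h : n ≤ m generalizing n m
  · linarith [this m n (le_of_not_ge h)]
  have hle := mul_sub_le_sub_of_gap hgap h
  have hnonneg : 0 ≤ γ * ((m : ℝ) - n) := mul_nonneg hγ (sub_nonneg.2 (Int.cast_le.2 h))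
  nlinarith

lemma exp_neg_sq_sub_div_four_le_of_gap (hγ : 0 ≤ γ) (hgap : ∀ n : ℤ, μ (n + 1) - μ n ≥ γ)
    (n m : ℤ) : rexp (-(μ n - μ m) ^ 2 / 4) ≤ rexp (-(γ ^ 2 / 4) * ((n - m : ℤ) : ℝ) ^ 2) := by
  rw [exp_le_exp]
  push_cast
  linarith [sq_mul_sq_sub_le_sq_sub_of_gap hγ hgap n m]

end Gap

lemma summable_exp_neg_mul_int_sq {c : ℝ} (hc : 0 < c) :
    Summable fun k : ℤ => rexp (-c * (k : ℝ) ^ 2) := by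
  have hnat : Summable fun k : ℕ => rexp (-c * (k : ℝ) ^ 2) :=
    summable_exp_nat_mul_of_ge (neg_neg_of_pos hc) fun k => by
      exact_mod_cast Nat.le_self_pow two_ne_zero k
  exact .of_nat_of_neg (by simpa using hnat) (by simpa using hnat)

lemma sum_sum_mul_mul_le_of_row_sum_le {ι : Type*} (s : Finset ι) (x : ι → ℝ)
    {w : ι → ι → ℝ} {B : ℝ} (hw : ∀ n m, 0 ≤ w n m) (hsymm : ∀ n m, w n m = w m n)
    (hrow : ∀ n ∈ s, ∑ m ∈ s, w n m ≤ B) :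
    ∑ n ∈ s, ∑ m ∈ s, x n * x m * w n m ≤ B * ∑ n ∈ s, x n ^ 2 := by
  have hswap : ∑ n ∈ s, ∑ m ∈ s, x m ^ 2 * w n m = ∑ n ∈ s, ∑ m ∈ s, x n ^ 2 * w n m := by
    rw [sum_comm]
    exact sum_congr rfl fun n _ => sum_congr rfl fun m _ => by rw [hsymm]
  calc ∑ n ∈ s, ∑ m ∈ s, x n * x m * w n m
      ≤ ∑ n ∈ s, ∑ m ∈ s, (x n ^ 2 * w n m + x m ^ 2 * w n m) / 2 := by
        gcongr with n _ m _
        nlinarith [mul_nonneg (hw n m) (sq_nonneg (x n - x m))]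
    _ = ∑ n ∈ s, x n ^ 2 * ∑ m ∈ s, w n m := by
        simp only [← sum_div, sum_add_distrib, hswap, mul_sum]
        ring
    _ ≤ ∑ n ∈ s, x n ^ 2 * B := by
        gcongr with n hn
        exact hrow n hn
    _ = B * ∑ n ∈ s, x n ^ 2 := by rw [← sum_mul, mul_comm]

lemma sum_comp_sub_le_tsum {v : ℤ → ℝ} (hv0 : ∀ k, 0 ≤ v k) (hv : Summable v)
    (s : Finset ℤ) (n : ℤ) : ∑ m ∈ s, v (n - m) ≤ ∑' k, v k :=
  calc ∑ m ∈ s, v (n - m) ≤ ∑' m, v (n - m) :=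
        (hv.comp_injective sub_right_injective).sum_le_tsum s fun _ _ => hv0 _
    _ = ∑' k, v k := (Equiv.subLeft n).tsum_eq v

lemma sum_sum_mul_mul_comp_sub_le (s : Finset ℤ) (x : ℤ → ℝ) {v : ℤ → ℝ}
    (hv0 : ∀ k, 0 ≤ v k) (heven : ∀ k, v (-k) = v k) (hv : Summable v) :
    ∑ n ∈ s, ∑ m ∈ s, x n * x m * v (n - m) ≤ (∑' k, v k) * ∑ n ∈ s, x n ^ 2 :=
  sum_sum_mul_mul_le_of_row_sum_le s x (fun _ _ => hv0 _) (fun n m => by rw [← neg_sub, heven])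
    fun n _ => sum_comp_sub_le_tsum hv0 hv s n

lemma re_sum_sum_mul_conj_mul_le {ι : Type*} (s : Finset ι) (a : ι → ℂ) {G w : ι → ι → ℝ}
    (hG : ∀ n m, |G n m| ≤ w n m) :
    (∑ n ∈ s, ∑ m ∈ s, a n * conj (a m) * (G n m : ℂ)).re
      ≤ ∑ n ∈ s, ∑ m ∈ s, ‖a n‖ * ‖a m‖ * w n m := by
  refine (re_le_norm _).trans ((norm_sum_le _ _).trans (sum_le_sum fun n _ => ?_))
  refine (norm_sum_le _ _).trans (sum_le_sum fun m _ => ?_)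
  rw [norm_mul, norm_mul, norm_conj, norm_real, Real.norm_eq_abs]
  gcongr
  exact hG n m

lemma integrable_cexp_mul_gaussian (l : ℝ) :
    Integrable fun t : ℝ => cexp (I * l * t) * cexp (-t ^ 2) :=
  (integrable_cexp_quadratic (b := 1) (by simp) (I * l) 0).congr <| .of_forall fun t => by
    dsimp only
    rw [← Complex.exp_add]
    ring_nf

lemma integral_cexp_mul_gaussian (l : ℝ) :
    ∫ t : ℝ, cexp (I * l * t) * cexp (-t ^ 2) = ((√π * rexp (-l ^ 2 / 4) : ℝ) : ℂ) := by
  have h := fourierIntegral_gaussian (b := 1) (by simp) l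
  simp only [neg_mul, one_mul, div_one, mul_one] at h
  rw [h]
  push_cast
  rw [Real.sqrt_eq_rpow, ofReal_cpow pi_nonneg]
  norm_num

section ExpSum

variable {ι : Type*} (s : Finset ι) (a : ι → ℂ) (μ : ι → ℝ)

noncomputable def expSum (t : ℝ) : ℂ := ∑ n ∈ s, a n * cexp (I * μ n * t)

lemma expSum_mul_conj (t : ℝ) :
    expSum s a μ t * conj (expSum s a μ t)
      = ∑ n ∈ s, ∑ m ∈ s, a n * conj (a m) * cexp (I * ↑(μ n - μ m) * t) := by
  rw [expSum, map_sum, sum_mul_sum]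
  refine sum_congr rfl fun n _ => sum_congr rfl fun m _ => ?_
  rw [map_mul, ← Complex.exp_conj]
  simp only [map_mul, conj_I, conj_ofReal]
  rw [ofReal_sub, mul_mul_mul_comm, ← Complex.exp_add]
  ring_nf

lemma gaussian_mul_norm_sq_expSum_eq_re (t : ℝ) :
    rexp (-t ^ 2) * ‖expSum s a μ t‖ ^ 2
      = (∑ n ∈ s, ∑ m ∈ s,
          a n * conj (a m) * (cexp (I * ↑(μ n - μ m) * t) * cexp (-t ^ 2))).re := by
  simp only [← mul_assoc, ← sum_mul, ← expSum_mul_conj, mul_conj, ← ofReal_pow, ← ofReal_neg,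
    ← ofReal_exp, normSq_eq_norm_sq]
  norm_cast
  ring

lemma integrable_gaussian_mul_norm_sq_expSum :
    Integrable fun t : ℝ => rexp (-t ^ 2) * ‖expSum s a μ t‖ ^ 2 := by
  simp only [gaussian_mul_norm_sq_expSum_eq_re]
  exact (integrable_finsetSum _ fun n _ => integrable_finsetSum _ fun m _ =>
    (integrable_cexp_mul_gaussian _).const_mul _).re

lemma integral_gaussian_mul_norm_sq_expSum :
    ∫ t : ℝ, rexp (-t ^ 2) * ‖expSum s a μ t‖ ^ 2
      = (∑ n ∈ s, ∑ m ∈ s,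
          a n * conj (a m) * ((√π * rexp (-(μ n - μ m) ^ 2 / 4) : ℝ) : ℂ)).re := by
  have hint (n m : ι) : Integrable fun t : ℝ =>
      a n * conj (a m) * (cexp (I * ↑(μ n - μ m) * t) * cexp (-t ^ 2)) :=
    (integrable_cexp_mul_gaussian _).const_mul _
  simp only [gaussian_mul_norm_sq_expSum_eq_re]
  refine (integral_re (integrable_finsetSum _ fun n _ => integrable_finsetSum _ fun m _ =>
    hint n m)).trans ?_
  rw [integral_finsetSum _ fun n _ => integrable_finsetSum _ fun m _ => hint n m]
  simp only [integral_finsetSum _ fun m _ => hint _ m, integral_const_mul,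
    integral_cexp_mul_gaussian]
  rfl

end ExpSum

lemma intervalIntegral_le_exp_sq_mul_integral_gaussian_mul {g : ℝ → ℝ} (hg0 : ∀ t, 0 ≤ g t)
    (hg : Integrable fun t => rexp (-t ^ 2) * g t) (T : ℝ) :
    ∫ t in (-T)..T, g t ≤ rexp (T ^ 2) * ∫ t, rexp (-t ^ 2) * g t := by
  have hweight : ∀ t ∈ Set.uIoc (-T) T, ‖g t‖ ≤ rexp (T ^ 2) * (rexp (-t ^ 2) * g t) := by
    intro t ht
    have hsq : t ^ 2 ≤ T ^ 2 := by
      rcases Set.mem_uIoc.1 ht with ⟨h₁, h₂⟩ | ⟨h₁, h₂⟩ <;> nlinarith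
    rw [Real.norm_of_nonneg (hg0 t), ← mul_assoc, ← Real.exp_add]
    exact le_mul_of_one_le_left (hg0 t) (one_le_exp (by linarith))
  calc ∫ t in (-T)..T, g t
      ≤ ‖∫ t in (-T)..T, g t‖ := Real.le_norm_self _
    _ ≤ ∫ t in Ι (-T) T, ‖g t‖ := intervalIntegral.norm_integral_le_integral_norm_uIoc
    _ ≤ ∫ t in Ι (-T) T, rexp (T ^ 2) * (rexp (-t ^ 2) * g t) :=
        integral_mono_of_nonneg (.of_forall fun t => norm_nonneg _)
          (hg.const_mul _).integrableOn
          ((ae_restrict_iff' measurableSet_uIoc).2 (.of_forall hweight))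
    _ ≤ ∫ t, rexp (T ^ 2) * (rexp (-t ^ 2) * g t) :=
        setIntegral_le_integral (hg.const_mul _) (.of_forall fun t => by positivity [hg0 t])
    _ = rexp (T ^ 2) * ∫ t, rexp (-t ^ 2) * g t := integral_const_mul _ _

theorem direct_ingham_general (μ : ℤ → ℝ) (γ : ℝ) (hγ : 0 < γ)
    (hgap : ∀ n : ℤ, μ (n + 1) - μ n ≥ γ) (T : ℝ) :
    ∃ C > 0, ∀ (s : Finset ℤ) (a : ℤ → ℂ),
      (∫ t in (-T)..T,
          ‖∑ n ∈ s, a n * Complex.exp (Complex.I * (μ n) * t)‖ ^ 2)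
        ≤ C * ∑ n ∈ s, ‖a n‖ ^ 2 := by
  set v : ℤ → ℝ := fun k => rexp (-(γ ^ 2 / 4) * (k : ℝ) ^ 2)
  have hv : Summable v := summable_exp_neg_mul_int_sq (by positivity)
  have hv_pos : 0 < ∑' k, v k := hv.tsum_pos (fun _ => (exp_pos _).le) 0 (exp_pos _)
  refine ⟨rexp (T ^ 2) * √π * ∑' k, v k, by positivity, fun s a => ?_⟩
  calc (∫ t in (-T)..T, ‖expSum s a μ t‖ ^ 2)
      ≤ rexp (T ^ 2) * ∫ t, rexp (-t ^ 2) * ‖expSum s a μ t‖ ^ 2 :=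
        intervalIntegral_le_exp_sq_mul_integral_gaussian_mul (fun _ => sq_nonneg _)
          (integrable_gaussian_mul_norm_sq_expSum s a μ) T
    _ ≤ rexp (T ^ 2) * ∑ n ∈ s, ∑ m ∈ s, ‖a n‖ * ‖a m‖ * (√π * v (n - m)) := by
        rw [integral_gaussian_mul_norm_sq_expSum]
        gcongr
        refine re_sum_sum_mul_conj_mul_le s a fun n m => ?_
        rw [abs_of_nonneg (by positivity)]
        exact mul_le_mul_of_nonneg_left (exp_neg_sq_sub_div_four_le_of_gap hγ.le hgap n m)
          (sqrt_nonneg _)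
    _ ≤ rexp (T ^ 2) * (√π * ((∑' k, v k) * ∑ n ∈ s, ‖a n‖ ^ 2)) := by
        simp only [mul_left_comm _ √π, ← mul_sum]
        gcongr
        exact sum_sum_mul_mul_comp_sub_le s _ (fun _ => (exp_pos _).le) (fun k => by simp [v]) hv
    _ = rexp (T ^ 2) * √π * (∑' k, v k) * ∑ n ∈ s, ‖a n‖ ^ 2 := by ring

/-- Direct Ingham inequality: under a uniform gap condition μ_{n+1} - μ_n ≥ γ > 0,
∫_{-T}^T |∑ a_n e^{iμ_n t}|² dt ≤ C ∑ |a_n|² for every finite sequence (a_n). -/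
theorem direct_ingham (μ : ℤ → ℝ) (γ : ℝ) (hγ : 0 < γ)
    (hgap : ∀ n : ℤ, μ (n + 1) - μ n ≥ γ) (T : ℝ) (hT : 0 < T) :
    ∃ C > 0, ∀ (s : Finset ℤ) (a : ℤ → ℂ),
      (∫ t in (-T)..T,
          ‖∑ n ∈ s, a n * Complex.exp (Complex.I * (μ n) * t)‖ ^ 2)
        ≤ C * ∑ n ∈ s, ‖a n‖ ^ 2 :=
  direct_ingham_general μ γ hγ hgap T
end

section
/- Let 0 < λ < 1/4. There exists c(λ) > 0 such that for all positive integers N, all integers r with 0 ≤ r ≤ 2λN, and all integers n with r - λN ≤ n ≤ ⌊r/2⌋ - 1, the sequence μ_h(n) = -p_h(n) - p_h(r-n), with p_h(n) = 4(N+1)^2 sin^2(nπ/(N+1)), satisfies μ_h(n+1) - μ_h(n) ≥ 8(N+1)^2 \cos(2λπ) \sin^2(π/(N+1)) ≥ c(λ). -/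
open Real

lemma sin_sq_sub_sin_sq' (a b : ℝ) :
    Real.sin a ^ 2 - Real.sin b ^ 2 = Real.sin (a + b) * Real.sin (a - b) := by
  rw [Real.sin_add, Real.sin_sub]
  nlinarith [Real.sin_sq_add_cos_sq a, Real.sin_sq_add_cos_sq b]

lemma gap_identity (u v t : ℝ) :
    (Real.sin u ^ 2 - Real.sin (u + t) ^ 2) + (Real.sin (v - u) ^ 2 - Real.sin (v - u - t) ^ 2)
      = 2 * Real.cos v * Real.sin (v - 2 * u - t) * Real.sin t := by
  rw [sin_sq_sub_sin_sq' u (u + t), sin_sq_sub_sin_sq' (v - u) (v - u - t)]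
  have h1 : Real.sin (u - (u + t)) = - Real.sin t := by rw [show u - (u + t) = -t by ring, Real.sin_neg]
  have h2 : (v - u) - (v - u - t) = t := by ring
  rw [h1, h2]
  have h3 : Real.sin (v - u + (v - u - t)) - Real.sin (u + (u + t))
      = 2 * Real.sin (v - 2 * u - t) * Real.cos v := by
    rw [Real.sin_sub_sin]
    ring_nf
  linear_combination Real.sin t * h3

/-- Uniform gap for μ_h(n) = -p_h(n)-p_h(r-n) on the increasing branch:
for 0 ≤ r ≤ 2λN and r - λN ≤ n ≤ ⌊r/2⌋ - 1,
μ_h(n+1) - μ_h(n) ≥ 8(N+1)² cos(2λπ) sin²(π/(N+1)) ≥ c(λ) > 0. -/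
theorem mu_uniform_gap (lam : ℝ) (hlam0 : 0 < lam) (hlam : lam < 1 / 4) :
    ∃ c > 0, ∀ N : ℕ, 0 < N → ∀ r n : ℤ,
      0 ≤ r → (r : ℝ) ≤ 2 * lam * N →
      ((r : ℝ) - lam * N ≤ (n : ℝ)) → n ≤ r / 2 - 1 →
      ((-(4 * (N + 1 : ℝ) ^ 2 * Real.sin (((n + 1 : ℤ) : ℝ) * π / (N + 1)) ^ 2)
          - 4 * (N + 1 : ℝ) ^ 2 * Real.sin (((r - (n + 1) : ℤ) : ℝ) * π / (N + 1)) ^ 2)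
        - (-(4 * (N + 1 : ℝ) ^ 2 * Real.sin ((n : ℝ) * π / (N + 1)) ^ 2)
          - 4 * (N + 1 : ℝ) ^ 2 * Real.sin (((r - n : ℤ) : ℝ) * π / (N + 1)) ^ 2))
        ≥ 8 * (N + 1 : ℝ) ^ 2 * Real.cos (2 * lam * π) * Real.sin (π / (N + 1)) ^ 2
      ∧ 8 * (N + 1 : ℝ) ^ 2 * Real.cos (2 * lam * π) * Real.sin (π / (N + 1)) ^ 2 ≥ c := by
  have hπ := Real.pi_pos
  have hcos : 0 < Real.cos (2 * lam * π) := by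
    apply Real.cos_pos_of_mem_Ioo
    constructor <;> nlinarith
  refine ⟨32 * Real.cos (2 * lam * π), by positivity, ?_⟩
  intro N hN r n hr0 hr2 hn1 hn2
  have hN1 : (1 : ℝ) ≤ (N : ℝ) := by exact_mod_cast hN
  have hNpos : (0 : ℝ) < (N : ℝ) + 1 := by linarith
  set t : ℝ := π / (N + 1) with ht
  have htpos : 0 < t := by positivity
  have ht2 : t ≤ π / 2 := by
    rw [ht, div_le_div_iff₀ hNpos (by norm_num)]
    nlinarith
  -- cast n ≤ r/2 - 1 in ℤ : 2n ≤ r - 2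
  have hn2' : 2 * n ≤ r - 2 := by omega
  have hn2R : 2 * (n : ℝ) ≤ (r : ℝ) - 2 := by exact_mod_cast hn2'
  -- m = r - 2n - 1
  have hm1 : (1 : ℝ) ≤ (r : ℝ) - 2 * n - 1 := by linarith
  have hrR0 : (0 : ℝ) ≤ (r : ℝ) := by exact_mod_cast hr0
  have hlamN : 2 * lam * (N : ℝ) ≤ 2 * lam * ((N : ℝ) + 1) := by nlinarith
  -- r * t ≤ 2 λ π and m * t ≤ 2 λ π, both < π/2
  have hrt : (r : ℝ) * t ≤ 2 * lam * π := by
    rw [ht]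
    rw [div_eq_mul_inv, ← mul_assoc]
    rw [show 2 * lam * π = (2 * lam * ((N:ℝ)+1)) * π * ((N:ℝ)+1)⁻¹ by
      field_simp]
    have : (r : ℝ) * π ≤ (2 * lam * ((N:ℝ)+1)) * π := by nlinarith
    exact mul_le_mul_of_nonneg_right this (by positivity)
  have hmub : (r : ℝ) - 2 * n - 1 ≤ 2 * lam * (N : ℝ) := by linarith
  have hmt : ((r : ℝ) - 2 * n - 1) * t ≤ 2 * lam * π := by
    rw [ht, div_eq_mul_inv, ← mul_assoc]
    rw [show 2 * lam * π = (2 * lam * ((N:ℝ)+1)) * π * ((N:ℝ)+1)⁻¹ by field_simp]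
    have : ((r : ℝ) - 2 * n - 1) * π ≤ (2 * lam * ((N:ℝ)+1)) * π := by nlinarith
    exact mul_le_mul_of_nonneg_right this (by positivity)
  have h2lam : 2 * lam * π ≤ π / 2 := by nlinarith
  -- main trig rewrite
  have key := gap_identity ((n : ℝ) * t) ((r : ℝ) * t) t
  have e1 : ((n : ℝ)) * t + t = ((n : ℝ) + 1) * t := by ring
  have e2 : (r : ℝ) * t - (n : ℝ) * t = ((r : ℝ) - n) * t := by ring
  have e3 : (r : ℝ) * t - (n : ℝ) * t - t = ((r : ℝ) - (n + 1)) * t := by ring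
  have e4 : (r : ℝ) * t - 2 * ((n : ℝ) * t) - t = ((r : ℝ) - 2 * n - 1) * t := by ring
  rw [e1, e3, e2, e4] at key
  -- bounds on cos and sin
  have hcosrt : Real.cos (2 * lam * π) ≤ Real.cos ((r : ℝ) * t) := by
    apply Real.cos_le_cos_of_nonneg_of_le_pi (by positivity) (by linarith) hrt
  have hsinm : Real.sin t ≤ Real.sin (((r : ℝ) - 2 * n - 1) * t) := by
    apply Real.sin_le_sin_of_le_of_le_pi_div_two (by linarith) (by linarith)
    nlinarith
  have hsint : 0 < Real.sin t := Real.sin_pos_of_pos_of_lt_pi htpos (by linarith)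
  have hcosrt0 : 0 ≤ Real.cos ((r : ℝ) * t) := le_trans hcos.le hcosrt
  have hprod : Real.cos (2 * lam * π) * Real.sin t
      ≤ Real.cos ((r : ℝ) * t) * Real.sin (((r : ℝ) - 2 * n - 1) * t) := by
    calc Real.cos (2 * lam * π) * Real.sin t
        ≤ Real.cos ((r : ℝ) * t) * Real.sin t :=
          mul_le_mul_of_nonneg_right hcosrt hsint.le
      _ ≤ Real.cos ((r : ℝ) * t) * Real.sin (((r : ℝ) - 2 * n - 1) * t) :=
          mul_le_mul_of_nonneg_left hsinm hcosrt0
  constructor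
  · have harg1 : ((n + 1 : ℤ) : ℝ) * π / (N + 1) = ((n : ℝ) + 1) * t := by
      push_cast [ht]; ring
    have harg2 : ((r - (n + 1) : ℤ) : ℝ) * π / (N + 1) = ((r : ℝ) - (n + 1)) * t := by
      push_cast [ht]; ring
    have harg3 : ((n : ℝ)) * π / (N + 1) = (n : ℝ) * t := by rw [ht]; ring
    have harg4 : ((r - n : ℤ) : ℝ) * π / (N + 1) = ((r : ℝ) - n) * t := by
      push_cast [ht]; ring
    rw [harg1, harg2, harg3, harg4]
    have h5 : Real.cos (2 * lam * π) * Real.sin t * Real.sin t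
        ≤ Real.cos ((r : ℝ) * t) * Real.sin (((r : ℝ) - 2 * n - 1) * t) * Real.sin t :=
      mul_le_mul_of_nonneg_right hprod hsint.le
    have h6 := mul_le_mul_of_nonneg_left h5
      (by positivity : (0:ℝ) ≤ 8 * ((N : ℝ) + 1) ^ 2)
    rw [ge_iff_le]
    calc 8 * ((N : ℝ) + 1) ^ 2 * Real.cos (2 * lam * π) * Real.sin t ^ 2
        = 8 * ((N : ℝ) + 1) ^ 2 * (Real.cos (2 * lam * π) * Real.sin t * Real.sin t) := by ring
      _ ≤ 8 * ((N : ℝ) + 1) ^ 2 *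
          (Real.cos ((r : ℝ) * t) * Real.sin (((r : ℝ) - 2 * n - 1) * t) * Real.sin t) := h6
      _ = _ := by linear_combination (-4 * ((N : ℝ) + 1) ^ 2) * key
  · -- sin t ≥ 2/(N+1)
    have hsinb : 2 / ((N : ℝ) + 1) ≤ Real.sin t := by
      have := Real.mul_le_sin (x := t) htpos.le ht2
      have : 2 / π * t ≤ Real.sin t := this
      rw [ht] at this
      calc 2 / ((N : ℝ) + 1) = 2 / π * (π / ((N : ℝ) + 1)) := by field_simp
        _ ≤ Real.sin t := this
    have h1 : (2 / ((N : ℝ) + 1)) ^ 2 ≤ Real.sin t ^ 2 :=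
      pow_le_pow_left₀ (by positivity) hsinb 2
    have h2 : (2 / ((N : ℝ) + 1)) ^ 2 = 4 / ((N : ℝ) + 1) ^ 2 := by
      rw [div_pow]; norm_num
    rw [ge_iff_le]
    have h3 : 8 * ((N : ℝ) + 1) ^ 2 * Real.cos (2 * lam * π) * (4 / ((N : ℝ) + 1) ^ 2)
        = 32 * Real.cos (2 * lam * π) := by field_simp; ring
    have h4 := mul_le_mul_of_nonneg_left (h2 ▸ h1)
      (by positivity : (0:ℝ) ≤ 8 * ((N : ℝ) + 1) ^ 2 * Real.cos (2 * lam * π))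
    linarith [h3 ▸ h4]
end

section
/- Let 0 < λ < 1/4, r an integer with 0 ≤ r ≤ 2λN, and μ_h(n) = -p_h(n) - p_h(r-n) with p_h(n) = 4(N+1)^2 sin^2(nπ/(N+1)). Then μ_h is strictly increasing on the integer range r - ⌊λN⌋ ≤ n ≤ ⌊r/2⌋ and strictly decreasing on the range ⌊r/2⌋ + 1 ≤ n ≤ ⌊λN⌋. -/
open Real

/-- Monotonicity of μ_h(n) = -p_h(n) - p_h(r-n): strictly increasing for
r - ⌊λN⌋ ≤ n ≤ ⌊r/2⌋ and strictly decreasing for ⌊r/2⌋ + 1 ≤ n ≤ ⌊λN⌋. -/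
theorem mu_monotonicity (lam : ℝ) (hlam0 : 0 < lam) (hlam : lam < 1 / 4)
    (N : ℕ) (hN : 0 < N) (r : ℤ) (hr0 : 0 ≤ r) (hr : (r : ℝ) ≤ 2 * lam * N)
    (μ : ℤ → ℝ)
    (hμ : ∀ n : ℤ, μ n = -(4 * (N + 1 : ℝ) ^ 2 * Real.sin ((n : ℝ) * π / (N + 1)) ^ 2)
      - 4 * (N + 1 : ℝ) ^ 2 * Real.sin (((r - n : ℤ) : ℝ) * π / (N + 1)) ^ 2) :
    (∀ n m : ℤ, r - ⌊lam * N⌋ ≤ n → n < m → m ≤ r / 2 → μ n < μ m) ∧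
    (∀ n m : ℤ, r / 2 + 1 ≤ n → n < m → m ≤ ⌊lam * N⌋ → μ m < μ n) := by
  have hN1 : (0:ℝ) < (N:ℝ) + 1 := by positivity
  have hNcast : (0:ℝ) ≤ (N:ℝ) := Nat.cast_nonneg N
  set c : ℝ := π / ((N:ℝ) + 1) with hcdef
  have hc : 0 < c := by positivity
  have hNc : ((N:ℝ) + 1) * c = π := by
    rw [hcdef]; field_simp
  have hflo : (⌊lam * N⌋ : ℝ) ≤ lam * N := Int.floor_le _
  have hr0' : (0:ℝ) ≤ (r:ℝ) := by exact_mod_cast hr0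
  have hlamN : 2 * lam * (N:ℝ) < (N:ℝ) + 1 := by nlinarith
  -- rewrite μ
  have hμ' : ∀ n : ℤ, μ n = 4 * ((N:ℝ) + 1) ^ 2 * Real.cos ((r:ℝ) * c) *
      Real.cos (((2 * n - r : ℤ) : ℝ) * c) - 4 * ((N:ℝ) + 1) ^ 2 := by
    intro n
    rw [hμ]
    have ha : (n:ℝ) * π / ((N:ℝ) + 1) = (n:ℝ) * c := by rw [hcdef]; ring
    have hb : ((r - n : ℤ) : ℝ) * π / ((N:ℝ) + 1) = ((r:ℝ) - n) * c := by
      push_cast; rw [hcdef]; ring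
    have hrc : (r:ℝ) * c = (n:ℝ) * c + ((r:ℝ) - n) * c := by ring
    have h2 : ((2 * n - r : ℤ) : ℝ) * c = (n:ℝ) * c - ((r:ℝ) - n) * c := by
      push_cast; ring
    rw [ha, hb, hrc, h2, Real.cos_add, Real.cos_sub]
    have P1 := Real.sin_sq_add_cos_sq ((n:ℝ) * c)
    have P2 := Real.sin_sq_add_cos_sq (((r:ℝ) - n) * c)
    linear_combination (-(4 * ((N:ℝ) + 1) ^ 2 * Real.cos (((r:ℝ) - n) * c) ^ 2)) * P1 +
      (-(4 * ((N:ℝ) + 1) ^ 2 * (1 - Real.sin ((n:ℝ) * c) ^ 2))) * P2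
  -- positivity of the factor
  have hr2 : 2 * (r:ℝ) < (N:ℝ) + 1 := by nlinarith
  have hrcpos : 0 < Real.cos ((r:ℝ) * c) := by
    apply Real.cos_pos_of_mem_Ioo
    constructor
    · have h0 : 0 ≤ (r:ℝ) * c := mul_nonneg hr0' hc.le
      have := Real.pi_pos
      linarith
    · have h1 : (r:ℝ) < ((N:ℝ) + 1) / 2 := by linarith
      calc (r:ℝ) * c < (((N:ℝ) + 1) / 2) * c := by
              exact mul_lt_mul_of_pos_right h1 hc
        _ = π / 2 := by rw [← hNc]; ring
  have hK : 0 < 4 * ((N:ℝ) + 1) ^ 2 * Real.cos ((r:ℝ) * c) := by positivity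
  constructor
  · -- increasing part
    intro n m hn hnm hm
    have h2m : 2 * m ≤ r := by omega
    have h2n : r - 2 * n ≤ 2 * ⌊lam * N⌋ - r := by omega
    have hx0 : (0:ℝ) ≤ ((r - 2 * m : ℤ) : ℝ) * c := by
      apply mul_nonneg _ hc.le
      have : (0:ℤ) ≤ r - 2 * m := by omega
      exact_mod_cast this
    have hyπ : ((r - 2 * n : ℤ) : ℝ) * c ≤ π := by
      rw [← hNc]
      apply mul_le_mul_of_nonneg_right _ hc.le
      have h2n' : ((r - 2 * n : ℤ) : ℝ) ≤ 2 * (⌊lam * N⌋ : ℝ) - r := by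
        exact_mod_cast h2n
      push_cast at h2n' ⊢
      nlinarith
    have hxy : ((r - 2 * m : ℤ) : ℝ) * c < ((r - 2 * n : ℤ) : ℝ) * c := by
      apply mul_lt_mul_of_pos_right _ hc
      have : (r - 2 * m : ℤ) < r - 2 * n := by omega
      exact_mod_cast this
    have hcoslt := Real.cos_lt_cos_of_nonneg_of_le_pi hx0 hyπ hxy
    have e1 : ((2 * n - r : ℤ) : ℝ) * c = -(((r - 2 * n : ℤ) : ℝ) * c) := by
      push_cast; ring
    have e2 : ((2 * m - r : ℤ) : ℝ) * c = -(((r - 2 * m : ℤ) : ℝ) * c) := by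
      push_cast; ring
    have hcos : Real.cos (((2 * n - r : ℤ) : ℝ) * c) <
        Real.cos (((2 * m - r : ℤ) : ℝ) * c) := by
      rw [e1, e2, Real.cos_neg, Real.cos_neg]; exact hcoslt
    rw [hμ' n, hμ' m]
    have := mul_lt_mul_of_pos_left hcos hK
    linarith
  · -- decreasing part
    intro n m hn hnm hm
    have h2n : 1 ≤ 2 * n - r := by omega
    have h2m : 2 * m - r ≤ 2 * ⌊lam * N⌋ := by omega
    have hx0 : (0:ℝ) ≤ ((2 * n - r : ℤ) : ℝ) * c := by
      apply mul_nonneg _ hc.le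
      have : (0:ℤ) ≤ 2 * n - r := by omega
      exact_mod_cast this
    have hyπ : ((2 * m - r : ℤ) : ℝ) * c ≤ π := by
      rw [← hNc]
      apply mul_le_mul_of_nonneg_right _ hc.le
      have h2m' : ((2 * m - r : ℤ) : ℝ) ≤ 2 * (⌊lam * N⌋ : ℝ) := by
        exact_mod_cast h2m
      push_cast at h2m' ⊢
      nlinarith
    have hxy : ((2 * n - r : ℤ) : ℝ) * c < ((2 * m - r : ℤ) : ℝ) * c := by
      apply mul_lt_mul_of_pos_right _ hc
      have : (2 * n - r : ℤ) < 2 * m - r := by omega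
      exact_mod_cast this
    have hcos := Real.cos_lt_cos_of_nonneg_of_le_pi hx0 hyπ hxy
    rw [hμ' n, hμ' m]
    have := mul_lt_mul_of_pos_left hcos hK
    linarith
end

section
/- Let N be a positive integer and r an integer with 0 ≤ r ≤ N/4. There is an absolute constant c > 0 such that for all integers n, m in the range I(r,N) = { r - N/8, ..., ⌊r/2⌋ } with n ≠ m, the quantity μ_h(n,m) = p_h(n)+p_h(r-n)-p_h(m)-p_h(r-m), with p_h(n) = 4(N+1)^2 sin^2(nπ/(N+1)), satisfies |μ_h(n,m)| ≥ c |n-m| |r-m-n|. -/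
open Real

private lemma key_trig (x y t : ℝ) :
    Real.sin x ^ 2 + Real.sin (t - x) ^ 2 - Real.sin y ^ 2 - Real.sin (t - y) ^ 2
      = 2 * Real.cos t * Real.sin (x + y - t) * Real.sin (x - y) := by
  have px := Real.sin_sq_add_cos_sq x
  have py := Real.sin_sq_add_cos_sq y
  have pt := Real.sin_sq_add_cos_sq t
  rw [Real.sin_sub t x, Real.sin_sub t y, show x + y - t = (x + y) - t by ring,
    Real.sin_sub (x + y) t, Real.sin_add, Real.cos_add, Real.sin_sub x y]
  linear_combination
    (Real.sin t ^ 2 + 2 * Real.sin y ^ 2 * Real.cos t ^ 2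
      - 2 * Real.sin y * Real.cos y * Real.sin t * Real.cos t) * px
    + (-Real.sin t ^ 2 - 2 * Real.sin x ^ 2 * Real.cos t ^ 2
      + 2 * Real.sin x * Real.cos x * Real.sin t * Real.cos t) * py
    + (Real.sin y ^ 2 - Real.sin x ^ 2) * pt

private lemma jordan_abs (u : ℝ) (h : |u| ≤ π / 2) : 2 / π * |u| ≤ |Real.sin u| := by
  have h1 : 2 / π * |u| ≤ Real.sin |u| := Real.mul_le_sin (abs_nonneg u) h
  have h2 : Real.sin |u| ≤ |Real.sin u| := by
    rcases abs_cases u with ⟨e, _⟩ | ⟨e, _⟩ <;> rw [e]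
    · exact le_abs_self _
    · rw [Real.sin_neg]; exact neg_le_abs _
  linarith

set_option maxHeartbeats 1000000 in
/-- Quantitative separation: for n ≠ m in I(r,N) = {r - N/8,…,⌊r/2⌋} with 0 ≤ r ≤ N/4,
|μ_h(n,m)| ≥ c |n-m| |r-m-n| for an absolute constant c > 0. -/
theorem mu_nm_lower_bound :
    ∃ c > 0, ∀ N : ℕ, 0 < N → ∀ r n m : ℤ,
      0 ≤ r → (r : ℝ) ≤ (N : ℝ) / 4 →
      ((r : ℝ) - (N : ℝ) / 8 ≤ (n : ℝ)) → n ≤ r / 2 →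
      ((r : ℝ) - (N : ℝ) / 8 ≤ (m : ℝ)) → m ≤ r / 2 →
      n ≠ m →
      |4 * (N + 1 : ℝ) ^ 2 * Real.sin ((n : ℝ) * π / (N + 1)) ^ 2
        + 4 * (N + 1 : ℝ) ^ 2 * Real.sin (((r - n : ℤ) : ℝ) * π / (N + 1)) ^ 2
        - 4 * (N + 1 : ℝ) ^ 2 * Real.sin ((m : ℝ) * π / (N + 1)) ^ 2
        - 4 * (N + 1 : ℝ) ^ 2 * Real.sin (((r - m : ℤ) : ℝ) * π / (N + 1)) ^ 2|
      ≥ c * |(n : ℝ) - m| * |(r : ℝ) - m - n| := by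
  refine ⟨1, one_pos, ?_⟩
  intro N hN r n m hr hrN hn1 hn2 hm1 hm2 hnm
  have hπ : (0:ℝ) < π := Real.pi_pos
  have hN1 : (0:ℝ) < (N:ℝ) + 1 := by positivity
  set X : ℝ := (n : ℝ) * π / ((N:ℝ) + 1) with hX
  set Y : ℝ := (m : ℝ) * π / ((N:ℝ) + 1) with hY
  set T : ℝ := (r : ℝ) * π / ((N:ℝ) + 1) with hT
  have e1 : ((r - n : ℤ) : ℝ) * π / ((N:ℝ) + 1) = T - X := by
    rw [hT, hX]; push_cast; ring
  have e2 : ((r - m : ℤ) : ℝ) * π / ((N:ℝ) + 1) = T - Y := by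
    rw [hT, hY]; push_cast; ring
  rw [e1, e2]
  -- integer facts
  have h2n : (2:ℤ) * n ≤ r := by omega
  have h2m : (2:ℤ) * m ≤ r := by omega
  have h2nR : 2 * (n:ℝ) ≤ (r:ℝ) := by exact_mod_cast h2n
  have h2mR : 2 * (m:ℝ) ≤ (r:ℝ) := by exact_mod_cast h2m
  have hrR : (0:ℝ) ≤ (r:ℝ) := by exact_mod_cast hr
  set a : ℝ := |(n:ℝ) - m| with ha
  set b : ℝ := |(r:ℝ) - m - n| with hb
  have haN : a ≤ (N:ℝ) / 4 := by
    rw [ha, abs_le]; constructor <;> nlinarith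
  have hbN : b ≤ (N:ℝ) / 4 := by
    rw [hb, abs_le]; constructor <;> nlinarith
  have ha0 : 0 ≤ a := abs_nonneg _
  have hb0 : 0 ≤ b := abs_nonneg _
  -- factorization
  have hfac : 4 * ((N:ℝ) + 1) ^ 2 * Real.sin X ^ 2
      + 4 * ((N:ℝ) + 1) ^ 2 * Real.sin (T - X) ^ 2
      - 4 * ((N:ℝ) + 1) ^ 2 * Real.sin Y ^ 2
      - 4 * ((N:ℝ) + 1) ^ 2 * Real.sin (T - Y) ^ 2
      = 8 * ((N:ℝ) + 1) ^ 2 * Real.cos T * Real.sin (X + Y - T) * Real.sin (X - Y) := by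
    linear_combination (4 * ((N:ℝ) + 1) ^ 2) * key_trig X Y T
  rw [hfac]
  -- bound on cos T
  have hT0 : 0 ≤ T := by positivity
  have hTle : T ≤ π / 3 := by
    rw [hT, div_le_iff₀ hN1]
    nlinarith
  have hcos : (1:ℝ)/2 ≤ Real.cos T := by
    have := Real.cos_le_cos_of_nonneg_of_le_pi hT0 (by linarith) hTle
    rwa [Real.cos_pi_div_three] at this
  -- bounds on the sines
  have hu : X - Y = ((n:ℝ) - m) * (π / ((N:ℝ) + 1)) := by rw [hX, hY]; ring
  have hv : X + Y - T = -(((r:ℝ) - m - n) * (π / ((N:ℝ) + 1))) := by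
    rw [hX, hY, hT]; ring
  have hθ : (0:ℝ) < π / ((N:ℝ) + 1) := by positivity
  have hau : |X - Y| = a * (π / ((N:ℝ) + 1)) := by
    rw [hu, abs_mul, abs_of_pos hθ, ha]
  have hbv : |X + Y - T| = b * (π / ((N:ℝ) + 1)) := by
    rw [hv, abs_neg, abs_mul, abs_of_pos hθ, hb]
  have hsmall : ∀ w : ℝ, 0 ≤ w → w ≤ (N:ℝ)/4 → w * (π / ((N:ℝ) + 1)) ≤ π / 2 := by
    intro w hw0 hw
    have h1 : w * (π / ((N:ℝ) + 1)) ≤ ((N:ℝ)/4) * (π / ((N:ℝ) + 1)) :=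
      mul_le_mul_of_nonneg_right hw hθ.le
    have h2 : ((N:ℝ)/4) * (π / ((N:ℝ) + 1)) ≤ π / 2 := by
      rw [div_mul_div_comm, div_le_div_iff₀ (by positivity) (by norm_num : (0:ℝ) < 2)]
      nlinarith [mul_nonneg (Nat.cast_nonneg N : (0:ℝ) ≤ (N:ℝ)) hπ.le]
    linarith
  have hsu : 2 * a / ((N:ℝ) + 1) ≤ |Real.sin (X - Y)| := by
    have h := jordan_abs (X - Y) (by rw [hau]; exact hsmall a ha0 haN)
    rw [hau] at h
    calc 2 * a / ((N:ℝ) + 1) = 2 / π * (a * (π / ((N:ℝ) + 1))) := by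
          field_simp
      _ ≤ |Real.sin (X - Y)| := h
  have hsv : 2 * b / ((N:ℝ) + 1) ≤ |Real.sin (X + Y - T)| := by
    have h := jordan_abs (X + Y - T) (by rw [hbv]; exact hsmall b hb0 hbN)
    rw [hbv] at h
    calc 2 * b / ((N:ℝ) + 1) = 2 / π * (b * (π / ((N:ℝ) + 1))) := by
          field_simp
      _ ≤ |Real.sin (X + Y - T)| := h
  have habs : |8 * ((N:ℝ) + 1) ^ 2 * Real.cos T * Real.sin (X + Y - T) * Real.sin (X - Y)|
      = 8 * ((N:ℝ) + 1) ^ 2 * |Real.cos T| * |Real.sin (X + Y - T)| * |Real.sin (X - Y)| := by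
    rw [abs_mul, abs_mul, abs_mul]
    congr 2
    rw [abs_of_pos (by positivity : (0:ℝ) < 8 * ((N:ℝ) + 1) ^ 2)]
  rw [habs]
  have hcabs : (1:ℝ)/2 ≤ |Real.cos T| := le_trans hcos (le_abs_self _)
  have hprod : (2 * b / ((N:ℝ) + 1)) * (2 * a / ((N:ℝ) + 1))
      ≤ |Real.sin (X + Y - T)| * |Real.sin (X - Y)| :=
    mul_le_mul hsv hsu (by positivity) (abs_nonneg _)
  have hfinal : 8 * ((N:ℝ) + 1) ^ 2 * ((1:ℝ)/2) * ((2 * b / ((N:ℝ) + 1)) * (2 * a / ((N:ℝ) + 1)))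
      ≤ 8 * ((N:ℝ) + 1) ^ 2 * |Real.cos T| * |Real.sin (X + Y - T)| * |Real.sin (X - Y)| := by
    have h1 : 8 * ((N:ℝ) + 1) ^ 2 * ((1:ℝ)/2) ≤ 8 * ((N:ℝ) + 1) ^ 2 * |Real.cos T| := by
      nlinarith
    calc 8 * ((N:ℝ) + 1) ^ 2 * ((1:ℝ)/2) * ((2 * b / ((N:ℝ) + 1)) * (2 * a / ((N:ℝ) + 1)))
        ≤ (8 * ((N:ℝ) + 1) ^ 2 * |Real.cos T|) * (|Real.sin (X + Y - T)| * |Real.sin (X - Y)|) := by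
          apply mul_le_mul h1 hprod (by positivity) (by positivity)
      _ = 8 * ((N:ℝ) + 1) ^ 2 * |Real.cos T| * |Real.sin (X + Y - T)| * |Real.sin (X - Y)| := by
          ring
  have hval : 8 * ((N:ℝ) + 1) ^ 2 * ((1:ℝ)/2) * ((2 * b / ((N:ℝ) + 1)) * (2 * a / ((N:ℝ) + 1)))
      = 16 * b * a := by
    field_simp
    ring
  rw [ge_iff_le]
  calc (1:ℝ) * a * b ≤ 16 * b * a := by nlinarith
    _ = 8 * ((N:ℝ) + 1) ^ 2 * ((1:ℝ)/2) * ((2 * b / ((N:ℝ) + 1)) * (2 * a / ((N:ℝ) + 1))) :=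
        hval.symm
    _ ≤ _ := hfinal
end

section
/- (Zygmund's L^4 estimate) For every finitely supported sequence (a_k)_{k∈ℤ} of complex numbers, ∫_0^{1/(2π)} ∫_0^1 | \sum_k a_k e^{-4π^2 i k^2 t} e^{2π i k x} |^4 dx dt ≤ C ( \sum_k |a_k|^2 )^2 for an absolute constant C > 0. -/
/-!
Write `u(t,x) = ∑ₖ aₖ e^{-4π²ik²t} e^{2πikx}`. Then `u²` is again a finite sum of space-time
exponentials, indexed by pairs `(k₁, k₂)` with frequencies `(k₁² + k₂², k₁ + k₂)`, so by
orthogonality `∫∫ |u|⁴ = ∫∫ |u²|²` is `1/(2π)` times the sum of `aₖ₁ aₖ₂ conj (aₖ₃ aₖ₄)` over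
pairs with equal frequencies. Equal sums and equal sums of squares force `{k₁, k₂} = {k₃, k₄}`,
so each such term is `|aₖ₁ aₖ₂|²` and each pair has at most two partners, whence
`∫∫ |u|⁴ ≤ (1/π) (∑ |aₖ|²)²`.
-/

open Real Complex Finset ComplexConjugate

noncomputable def wave (ω : ℝ) (m : ℤ) (t : ℝ) : ℂ := exp (ω * I * m * t)

lemma wave_add (ω : ℝ) (m m' : ℤ) (t : ℝ) : wave ω (m + m') t = wave ω m t * wave ω m' t := by
  rw [wave, wave, wave, ← Complex.exp_add]; push_cast; ring_nf

lemma conj_wave (ω : ℝ) (m : ℤ) (t : ℝ) : conj (wave ω m t) = wave ω (-m) t := by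
  simp only [wave, ← Complex.exp_conj, map_mul, conj_ofReal, conj_I, map_intCast]
  push_cast
  ring_nf

lemma continuous_wave (ω : ℝ) (m : ℤ) : Continuous (wave ω m) := by
  unfold wave; fun_prop

lemma integral_wave {ω T : ℝ} (hω : ω ≠ 0) {j : ℤ} (hT : ω * T = 2 * π * j) (m : ℤ) :
    ∫ t in (0 : ℝ)..T, wave ω m t = if m = 0 then (T : ℂ) else 0 := by
  split_ifs with hm
  · simp [wave, hm]
  · have hc : (ω * I * m : ℂ) ≠ 0 := by simp [hω, hm]
    have hTc : (ω * T : ℂ) = 2 * π * j := by exact_mod_cast hT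
    have hperiod : exp (ω * I * m * T) = 1 := by
      rw [show (ω * I * m * T : ℂ) = (j * m : ℤ) * (2 * π * I) by
        push_cast; linear_combination I * m * hTc]
      exact exp_int_mul_two_pi_mul_I _
    simp [wave, integral_exp_mul_complex hc, hperiod]

lemma sq_sum_wave {ι : Type*} (s : Finset ι) (a : ι → ℂ) (m n : ι → ℤ) (ω ω' t x : ℝ) :
    (∑ k ∈ s, a k * wave ω (m k) t * wave ω' (n k) x) ^ 2
      = ∑ p ∈ s ×ˢ s, a p.1 * a p.2 * wave ω (m p.1 + m p.2) t * wave ω' (n p.1 + n p.2) x := by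
  rw [sq, sum_mul_sum, sum_product]
  refine sum_congr rfl fun k _ => sum_congr rfl fun l _ => ?_
  rw [wave_add, wave_add]
  ring

lemma integral_integral_sum_mul_mul {ι : Type*} (s : Finset ι) (c : ι → ℂ) (f g : ι → ℝ → ℂ)
    {a b a' b' : ℝ} (hf : ∀ i ∈ s, IntervalIntegrable (f i) MeasureTheory.volume a b)
    (hg : ∀ i ∈ s, IntervalIntegrable (g i) MeasureTheory.volume a' b') :
    ∫ t in a..b, ∫ x in a'..b', ∑ i ∈ s, c i * f i t * g i x
      = ∑ i ∈ s, c i * (∫ t in a..b, f i t) * ∫ x in a'..b', g i x := by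
  have inner : ∀ t, ∫ x in a'..b', ∑ i ∈ s, c i * f i t * g i x
      = ∑ i ∈ s, c i * f i t * ∫ x in a'..b', g i x := fun t => by
    rw [intervalIntegral.integral_finsetSum fun i hi => (hg i hi).const_mul _]
    simp only [intervalIntegral.integral_const_mul]
  simp only [inner]
  rw [intervalIntegral.integral_finsetSum fun i hi => ((hf i hi).const_mul _).mul_const _]
  simp only [intervalIntegral.integral_mul_const, intervalIntegral.integral_const_mul]

lemma norm_sq_sum_wave {ι : Type*} (S : Finset ι) (c : ι → ℂ) (m n : ι → ℤ) (ω ω' t x : ℝ) :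
    ((‖∑ i ∈ S, c i * wave ω (m i) t * wave ω' (n i) x‖ ^ 2 : ℝ) : ℂ)
      = ∑ p ∈ S ×ˢ S, c p.1 * conj (c p.2) * wave ω (m p.1 - m p.2) t
          * wave ω' (n p.1 - n p.2) x := by
  rw [ofReal_pow, ← mul_conj', map_sum, sum_mul_sum, sum_product]
  refine sum_congr rfl fun i _ => sum_congr rfl fun k _ => ?_
  simp only [map_mul, conj_wave, sub_eq_add_neg, wave_add]
  ring

lemma integral_integral_norm_sq_sum_wave {ι : Type*} [DecidableEq ι] (S : Finset ι) (c : ι → ℂ)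
    (m n : ι → ℤ) {ω ω' T X : ℝ} {j j' : ℤ} (hω : ω ≠ 0) (hT : ω * T = 2 * π * j)
    (hω' : ω' ≠ 0) (hX : ω' * X = 2 * π * j') :
    ((∫ t in (0 : ℝ)..T, ∫ x in (0 : ℝ)..X,
        ‖∑ i ∈ S, c i * wave ω (m i) t * wave ω' (n i) x‖ ^ 2 : ℝ) : ℂ)
      = T * X * ∑ i ∈ S, ∑ k ∈ S with m k = m i ∧ n k = n i, c i * conj (c k) := by
  simp_rw [← intervalIntegral.integral_ofReal, norm_sq_sum_wave]
  rw [integral_integral_sum_mul_mul _ _ _ _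
    (fun _ _ => (continuous_wave _ _).intervalIntegrable _ _)
    (fun _ _ => (continuous_wave _ _).intervalIntegrable _ _)]
  simp only [integral_wave hω hT, integral_wave hω' hX, sub_eq_zero, sum_product, mul_sum,
    sum_filter]
  refine sum_congr rfl fun i _ => sum_congr rfl fun k _ => ?_
  simp only [mul_ite, ite_and, eq_comm (a := m k), eq_comm (a := n k), mul_zero]
  split_ifs <;> ring

lemma sum_filter_mul_conj_of_eq {ι : Type*} (S : Finset ι) (c : ι → ℂ) (i : ι) (P : ι → Prop)
    [DecidablePred P] (h : ∀ k ∈ S, P k → c k = c i) :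
    ∑ k ∈ S with P k, c i * conj (c k) = ((‖c i‖ ^ 2 * #{k ∈ S | P k} : ℝ) : ℂ) := by
  rw [sum_congr rfl fun k hk => by rw [h k (mem_filter.1 hk).1 (mem_filter.1 hk).2], sum_const,
    mul_conj', nsmul_eq_mul]
  push_cast
  ring

lemma eq_or_eq_swap_of_sq_add_sq_eq_of_add_eq {p q : ℤ × ℤ}
    (hsq : q.1 ^ 2 + q.2 ^ 2 = p.1 ^ 2 + p.2 ^ 2) (hadd : q.1 + q.2 = p.1 + p.2) :
    q = p ∨ q = p.swap := by
  obtain ⟨k₁, k₂⟩ := p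
  obtain ⟨k₃, k₄⟩ := q
  dsimp only at hsq hadd
  have h : 2 * ((k₁ - k₃) * (k₁ - k₄)) = 0 := by
    linear_combination hsq.symm + (k₁ - k₂ - k₃ - k₄) * hadd.symm
  rcases mul_eq_zero.1 ((mul_eq_zero.1 h).resolve_left two_ne_zero) with h | h
  · left; ext <;> dsimp only <;> omega
  · right; ext <;> dsimp only [Prod.swap] <;> omega

lemma card_filter_sq_add_sq_eq_and_add_eq_le_two (S : Finset (ℤ × ℤ)) (p : ℤ × ℤ) :
    #{q ∈ S | q.1 ^ 2 + q.2 ^ 2 = p.1 ^ 2 + p.2 ^ 2 ∧ q.1 + q.2 = p.1 + p.2} ≤ 2 := by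
  refine (card_le_card fun q hq => ?_).trans (card_le_two (a := p) (b := p.swap))
  obtain ⟨-, hsq, hadd⟩ := mem_filter.1 hq
  rcases eq_or_eq_swap_of_sq_add_sq_eq_of_add_eq hsq hadd with rfl | rfl <;> simp

lemma integral_integral_norm_pow_four_sum_wave (s : Finset ℤ) (a : ℤ → ℂ) :
    ∫ t in (0 : ℝ)..(1 / (2 * π)), ∫ x in (0 : ℝ)..1,
        ‖∑ k ∈ s, a k * wave (-4 * π ^ 2) (k ^ 2) t * wave (2 * π) k x‖ ^ 4
      = (2 * π)⁻¹ * ∑ p ∈ s ×ˢ s, ‖a p.1 * a p.2‖ ^ 2 *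
          #{q ∈ s ×ˢ s | q.1 ^ 2 + q.2 ^ 2 = p.1 ^ 2 + p.2 ^ 2 ∧ q.1 + q.2 = p.1 + p.2} := by
  have hsymm : ∀ p : ℤ × ℤ, ∀ q ∈ s ×ˢ s,
      q.1 ^ 2 + q.2 ^ 2 = p.1 ^ 2 + p.2 ^ 2 ∧ q.1 + q.2 = p.1 + p.2 →
        a q.1 * a q.2 = a p.1 * a p.2 := by
    rintro p q - ⟨hsq, hadd⟩
    rcases eq_or_eq_swap_of_sq_add_sq_eq_of_add_eq hsq hadd with rfl | rfl
    · rfl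
    · exact mul_comm _ _
  have hsq : ∀ t x : ℝ, ‖∑ k ∈ s, a k * wave (-4 * π ^ 2) (k ^ 2) t * wave (2 * π) k x‖ ^ 4
      = ‖∑ p ∈ s ×ˢ s, a p.1 * a p.2 * wave (-4 * π ^ 2) (p.1 ^ 2 + p.2 ^ 2) t
          * wave (2 * π) (p.1 + p.2) x‖ ^ 2 := fun t x => by
    rw [show 4 = 2 * 2 from rfl, pow_mul, ← norm_pow, sq_sum_wave]
  simp only [hsq]
  apply ofReal_injective
  rw [integral_integral_norm_sq_sum_wave (j := -1) (j' := 1) _ _ _ _ (by positivity)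
    (by field_simp; push_cast; ring) (by positivity) (by simp), sum_congr rfl fun p _ =>
      sum_filter_mul_conj_of_eq _ (fun q => a q.1 * a q.2) p _ (hsymm p)]
  push_cast
  ring

/-- Zygmund's L⁴ estimate for the periodic Schrödinger flow:
∫₀^{1/(2π)} ∫₀¹ |∑ a_k e^{-4π²ik²t} e^{2πikx}|⁴ dx dt ≤ C (∑ |a_k|²)². -/
theorem zygmund_L4 :
    ∃ C > 0, ∀ (s : Finset ℤ) (a : ℤ → ℂ),
      (∫ t in (0 : ℝ)..(1 / (2 * π)), ∫ x in (0 : ℝ)..1,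
          ‖∑ k ∈ s,
            a k * Complex.exp (-4 * π ^ 2 * Complex.I * (k : ℂ) ^ 2 * t) *
              Complex.exp (2 * π * Complex.I * (k : ℂ) * x)‖ ^ 4)
        ≤ C * (∑ k ∈ s, ‖a k‖ ^ 2) ^ 2 := by
  refine ⟨1 / π, by positivity, fun s a => ?_⟩
  have hwave : ∀ t x : ℝ, ∑ k ∈ s, a k * cexp (-4 * π ^ 2 * I * (k : ℂ) ^ 2 * t) *
        cexp (2 * π * I * (k : ℂ) * x)
      = ∑ k ∈ s, a k * wave (-4 * π ^ 2) (k ^ 2) t * wave (2 * π) k x := fun t x =>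
    sum_congr rfl fun k _ => by simp only [wave]; push_cast; ring_nf
  simp only [hwave, integral_integral_norm_pow_four_sum_wave]
  calc _ ≤ (2 * π)⁻¹ * ∑ p ∈ s ×ˢ s, ‖a p.1 * a p.2‖ ^ 2 * 2 := by
        gcongr with p
        exact_mod_cast card_filter_sq_add_sq_eq_and_add_eq_le_two _ p
    _ = 1 / π * (∑ k ∈ s, ‖a k‖ ^ 2) ^ 2 := by
        simp only [← sum_mul, sum_product, norm_mul, mul_pow, ← mul_sum]
        field_simp
end
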